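/- arXiv:2501.18379 — 5 statements merged into one kernel-verified Lean document; each statement's English description precedes it below -/
import Mathlib

section
/- For all finitely supported functions φ: ℕ → ℝ (extended by φ(0) = 0), Σ_{n=1}^∞ (φ(n) - φ(n-1))² ≥ Σ_{n=1}^∞ w(n) φ(n)², where w(n) = 2 - √(n(n-1))/n - √(n(n+1))/n. Moreover w(n) ≥ 1/(4n²) for all n ≥ 1. -/
open Finset

private lemma step6 (sN s1 s2 x y W : ℝ) (h1 : 0 < s1) (h2 : 0 < s2)
    (hW : W = 2 - sN/s1 - s2/s1) :
    W*y^2 + (s2-s1)*x^2/s2 ≤ (s1-sN)*y^2/s1 + (x-y)^2 := by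
  subst hW
  rw [← sub_nonneg]
  have key : (s1-sN)*y^2/s1 + (x-y)^2 - ((2 - sN/s1 - s2/s1)*y^2 + (s2-s1)*x^2/s2)
      = (s1*x - s2*y)^2 / (s1*s2) := by
    field_simp
    ring
  rw [key]
  positivity

private lemma wval6 (w : ℕ → ℝ)
    (hw : ∀ n : ℕ, 1 ≤ n →
      w n = 2 - Real.sqrt ((n : ℝ) * ((n : ℝ) - 1)) / n - Real.sqrt ((n : ℝ) * ((n : ℝ) + 1)) / n)
    (n : ℕ) :
    w (n+1) = 2 - Real.sqrt n / Real.sqrt ((n:ℝ)+1) - Real.sqrt ((n:ℝ)+2) / Real.sqrt ((n:ℝ)+1) := by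
  have h := hw (n+1) (by omega)
  have hs : Real.sqrt ((n:ℝ)+1) * Real.sqrt ((n:ℝ)+1) = (n:ℝ)+1 :=
    Real.mul_self_sqrt (by positivity)
  have hne : Real.sqrt ((n:ℝ)+1) ≠ 0 := by positivity
  have h1 : Real.sqrt (((n:ℝ)+1) * (((n:ℝ)+1) - 1)) = Real.sqrt ((n:ℝ)+1) * Real.sqrt n := by
    rw [← Real.sqrt_mul (by positivity)]; norm_num
  have h2 : Real.sqrt (((n:ℝ)+1) * (((n:ℝ)+1) + 1)) = Real.sqrt ((n:ℝ)+1) * Real.sqrt ((n:ℝ)+2) := by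
    rw [← Real.sqrt_mul (by positivity)]; ring_nf
  have e1 : Real.sqrt ((n:ℝ)+1) * Real.sqrt n / ((n:ℝ)+1) = Real.sqrt n / Real.sqrt ((n:ℝ)+1) := by
    rw [div_eq_div_iff (by positivity) (by positivity)]
    linear_combination Real.sqrt (n:ℝ) * hs
  have e2 : Real.sqrt ((n:ℝ)+1) * Real.sqrt ((n:ℝ)+2) / ((n:ℝ)+1)
      = Real.sqrt ((n:ℝ)+2) / Real.sqrt ((n:ℝ)+1) := by
    rw [div_eq_div_iff (by positivity) (by positivity)]
    linear_combination Real.sqrt ((n:ℝ)+2) * hs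
  push_cast at h
  rw [h, h1, h2, e1, e2]

private lemma Qlem6 (φ w : ℕ → ℝ) (h0 : φ 0 = 0)
    (hwv : ∀ n : ℕ, w (n+1) = 2 - Real.sqrt n / Real.sqrt ((n:ℝ)+1)
      - Real.sqrt ((n:ℝ)+2) / Real.sqrt ((n:ℝ)+1)) :
    ∀ N : ℕ, ∑ n ∈ range N, w (n+1) * φ (n+1)^2
      + (Real.sqrt ((N:ℝ)+1) - Real.sqrt N) * φ (N+1)^2 / Real.sqrt ((N:ℝ)+1)
      ≤ ∑ n ∈ range (N+1), (φ (n+1) - φ n)^2 := by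
  intro N
  induction N with
  | zero => simp [h0]
  | succ N ih =>
    rw [sum_range_succ, sum_range_succ (fun n => (φ (n+1) - φ n)^2)]
    have hstep := step6 (Real.sqrt N) (Real.sqrt ((N:ℝ)+1)) (Real.sqrt ((N:ℝ)+2))
      (φ (N+2)) (φ (N+1)) (w (N+1)) (by positivity) (by positivity) (hwv N)
    have hc1 : ((N+1 : ℕ) : ℝ) + 1 = (N:ℝ) + 2 := by push_cast; ring
    have hc2 : ((N+1 : ℕ) : ℝ) = (N:ℝ) + 1 := by push_cast; ring
    rw [hc1, hc2]
    have e1 : (Real.sqrt ((N:ℝ)+2) - Real.sqrt ((N:ℝ)+1)) * φ (N+1+1)^2 / Real.sqrt ((N:ℝ)+2)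
        = (Real.sqrt ((N:ℝ)+2) - Real.sqrt ((N:ℝ)+1)) * φ (N+2)^2 / Real.sqrt ((N:ℝ)+2) := by
      norm_num
    have e2 : (φ (N+1+1) - φ (N+1))^2 = (φ (N+2) - φ (N+1))^2 := by norm_num
    rw [e1, e2]
    linarith

private lemma part2 (w : ℕ → ℝ)
    (hw : ∀ n : ℕ, 1 ≤ n →
      w n = 2 - Real.sqrt ((n : ℝ) * ((n : ℝ) - 1)) / n - Real.sqrt ((n : ℝ) * ((n : ℝ) + 1)) / n) :
    ∀ n : ℕ, 1 ≤ n → 1 / (4 * (n : ℝ) ^ 2) ≤ w n := by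
  intro n hn
  have hn1 : (1:ℝ) ≤ n := by exact_mod_cast hn
  have hnp : (0:ℝ) < n := by linarith
  rw [hw n hn]
  set a := Real.sqrt ((n : ℝ) * ((n : ℝ) - 1)) with ha
  set b := Real.sqrt ((n : ℝ) * ((n : ℝ) + 1)) with hb
  have ha0 : 0 ≤ a := Real.sqrt_nonneg _
  have hb0 : 0 ≤ b := Real.sqrt_nonneg _
  have ha2 : a^2 = (n:ℝ) * ((n:ℝ) - 1) := Real.sq_sqrt (by nlinarith)
  have hb2 : b^2 = (n:ℝ) * ((n:ℝ) + 1) := Real.sq_sqrt (by nlinarith)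
  have hab : a * b ≤ (n:ℝ)^2 - 1/2 := by
    rw [ha, hb, ← Real.sqrt_mul (by nlinarith)]
    have : ((n:ℝ) * ((n:ℝ) - 1)) * ((n:ℝ) * ((n:ℝ) + 1)) ≤ ((n:ℝ)^2 - 1/2)^2 := by nlinarith
    calc Real.sqrt (((n:ℝ) * ((n:ℝ) - 1)) * ((n:ℝ) * ((n:ℝ) + 1)))
        ≤ Real.sqrt (((n:ℝ)^2 - 1/2)^2) := Real.sqrt_le_sqrt this
      _ = (n:ℝ)^2 - 1/2 := Real.sqrt_sq (by nlinarith)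
  have hsum : a + b ≤ 2*(n:ℝ) - 1/(4*(n:ℝ)) := by
    have hsq : (a+b)^2 ≤ (2*(n:ℝ) - 1/(4*(n:ℝ)))^2 := by
      have h1 : (a+b)^2 ≤ 4*(n:ℝ)^2 - 1 := by nlinarith
      have h2 : (2*(n:ℝ) - 1/(4*(n:ℝ)))^2 = 4*(n:ℝ)^2 - 1 + (1/(4*n))^2 := by
        field_simp; ring
      nlinarith [sq_nonneg (1/(4*(n:ℝ)))]
    have hpos : 0 < 2*(n:ℝ) - 1/(4*(n:ℝ)) := by
      rw [sub_pos, div_lt_iff₀ (by positivity)]; nlinarith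
    nlinarith [sq_nonneg (a+b)]
  rw [div_le_iff₀ (by positivity)]
  have : a/(n:ℝ) + b/(n:ℝ) = (a+b)/(n:ℝ) := by ring
  have hd : (a+b)/(n:ℝ) ≤ 2 - 1/(4*(n:ℝ)^2) := by
    rw [div_le_iff₀ hnp]
    have : (2 - 1/(4*(n:ℝ)^2)) * n = 2*n - 1/(4*n) := by field_simp
    rw [this]; exact hsum
  have hfin : 1/(4*(n:ℝ)^2) ≤ 2 - a/(n:ℝ) - b/(n:ℝ) := by
    have := hd; rw [div_le_iff₀ hnp] at this
    nlinarith [this]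
  linarith [hfin, (div_le_iff₀ (show (0:ℝ) < 4*(n:ℝ)^2 by positivity)).mp hfin]

private lemma tsumpart (φ w : ℕ → ℝ) (h0 : φ 0 = 0) (hfin : (Function.support φ).Finite)
    (hwv : ∀ n : ℕ, w (n+1) = 2 - Real.sqrt n / Real.sqrt ((n:ℝ)+1)
      - Real.sqrt ((n:ℝ)+2) / Real.sqrt ((n:ℝ)+1))
    (Q : ∀ N : ℕ, ∑ n ∈ range N, w (n+1) * φ (n+1)^2
      + (Real.sqrt ((N:ℝ)+1) - Real.sqrt N) * φ (N+1)^2 / Real.sqrt ((N:ℝ)+1)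
      ≤ ∑ n ∈ range (N+1), (φ (n+1) - φ n)^2) :
    ∑' n : ℕ, w (n + 1) * φ (n + 1) ^ 2 ≤ ∑' n : ℕ, (φ (n + 1) - φ n) ^ 2 := by
  obtain ⟨N, hN⟩ : ∃ N : ℕ, ∀ m : ℕ, N ≤ m → φ m = 0 := by
    refine ⟨hfin.toFinset.sup id + 1, fun m hm => ?_⟩
    by_contra h
    have : m ∈ hfin.toFinset := by simpa [Function.mem_support] using h
    have := Finset.le_sup (f := id) this
    simp only [id] at this
    omega
  have h1 : ∑' n : ℕ, w (n + 1) * φ (n + 1) ^ 2 = ∑ n ∈ range N, w (n+1) * φ (n+1)^2 := by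
    apply tsum_eq_sum
    intro b hb
    rw [hN (b+1) (by simp at hb; omega)]
    ring
  have h2 : ∑' n : ℕ, (φ (n + 1) - φ n) ^ 2 = ∑ n ∈ range N, (φ (n+1) - φ n)^2 := by
    apply tsum_eq_sum
    intro b hb
    simp at hb
    rw [hN (b+1) (by omega), hN b (by omega)]
    ring
  rw [h1, h2]
  have hQ := Q N
  rw [sum_range_succ (fun n => (φ (n+1) - φ n)^2) N] at hQ
  have hz : φ (N+1) = 0 := hN _ (by omega)
  rw [hz] at hQ
  have hzN : φ N = 0 := hN N le_rfl
  rw [hzN] at hQ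
  simp at hQ
  linarith [hQ]

theorem stmt6 (φ : ℕ → ℝ) (h0 : φ 0 = 0) (hfin : (Function.support φ).Finite)
    (w : ℕ → ℝ)
    (hw : ∀ n : ℕ, 1 ≤ n →
      w n = 2 - Real.sqrt ((n : ℝ) * ((n : ℝ) - 1)) / n - Real.sqrt ((n : ℝ) * ((n : ℝ) + 1)) / n) :
    (∑' n : ℕ, w (n + 1) * φ (n + 1) ^ 2 ≤ ∑' n : ℕ, (φ (n + 1) - φ n) ^ 2) ∧
    (∀ n : ℕ, 1 ≤ n → 1 / (4 * (n : ℝ) ^ 2) ≤ w n) := by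
  have hwv := wval6 w hw
  exact ⟨tsumpart φ w h0 hfin hwv (Qlem6 φ w h0 hwv), part2 w hw⟩
end

section
/- Let b be a locally finite connected graph over a discrete measure space (X, m), let Ω ⊆ X, let v: X → ℝ with v > 0 on Ω, and set w = (-Δv)/v on Ω. Then for every finitely supported φ vanishing outside Ω: E(vφ) - Σ_{x∈Ω} w(x) v(x)² φ(x)² m(x) = (1/2) Σ_{x,y∈X} b(x,y) v(x) v(y) (φ(x) - φ(y))², where E(ψ) = (1/2) Σ_{x,y} b(x,y)(ψ(x)-ψ(y))² and -Δf(x) = (1/m(x)) Σ_y b(x,y)(f(x)-f(y)). -/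
theorem stmt10 {X : Type*} (b : X → X → ℝ) (m : X → ℝ) (Ω : Set X)
    (hb_symm : ∀ x y, b x y = b y x) (hb_nonneg : ∀ x y, 0 ≤ b x y)
    (hb_diag : ∀ x, b x x = 0)
    (hloc : ∀ x, {y | b x y ≠ 0}.Finite)
    (hm : ∀ x, 0 < m x)
    (v : X → ℝ) (hv : ∀ x ∈ Ω, 0 < v x)
    (w : X → ℝ)
    (hw : ∀ x ∈ Ω, w x = ((1 / m x) * ∑' y : X, b x y * (v x - v y)) / v x)
    (φ : X → ℝ) (hφfin : (Function.support φ).Finite) (hφΩ : ∀ x ∉ Ω, φ x = 0) :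
    (1 / 2) * (∑' p : X × X, b p.1 p.2 * (v p.1 * φ p.1 - v p.2 * φ p.2) ^ 2)
      - (∑' x : Ω, w x.1 * v x.1 ^ 2 * φ x.1 ^ 2 * m x.1)
      = (1 / 2) * ∑' p : X × X, b p.1 p.2 * v p.1 * v p.2 * (φ p.1 - φ p.2) ^ 2 := by
  classical
  set F : Finset X :=
    hφfin.toFinset ∪ hφfin.toFinset.biUnion (fun x => (hloc x).toFinset) with hFdef
  have hSF : ∀ x, φ x ≠ 0 → x ∈ F := fun x hx =>
    Finset.mem_union_left _ (hφfin.mem_toFinset.mpr hx)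
  have hNF : ∀ x y, φ x ≠ 0 → b x y ≠ 0 → y ∈ F := fun x y hx hbxy =>
    Finset.mem_union_right _ (Finset.mem_biUnion.mpr
      ⟨x, hφfin.mem_toFinset.mpr hx, (hloc x).mem_toFinset.mpr hbxy⟩)
  have hmemF : ∀ p : X × X, b p.1 p.2 ≠ 0 → (φ p.1 ≠ 0 ∨ φ p.2 ≠ 0) → p ∈ F ×ˢ F := by
    rintro ⟨x, y⟩ hb (h | h)
    · exact Finset.mem_product.mpr ⟨hSF x h, hNF x y h hb⟩
    · refine Finset.mem_product.mpr ⟨hNF y x h ?_, hSF y h⟩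
      rw [← hb_symm]; exact hb
  have h1 : (∑' p : X × X, b p.1 p.2 * (v p.1 * φ p.1 - v p.2 * φ p.2) ^ 2)
      = ∑ p ∈ F ×ˢ F, b p.1 p.2 * (v p.1 * φ p.1 - v p.2 * φ p.2) ^ 2 := by
    apply tsum_eq_sum
    intro p hp
    by_cases hb : b p.1 p.2 = 0
    · rw [hb]; ring
    · by_cases hx : φ p.1 = 0
      · by_cases hy : φ p.2 = 0
        · rw [hx, hy]; ring
        · exact absurd (hmemF p hb (Or.inr hy)) hp
      · exact absurd (hmemF p hb (Or.inl hx)) hp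
  have h2 : (∑' p : X × X, b p.1 p.2 * v p.1 * v p.2 * (φ p.1 - φ p.2) ^ 2)
      = ∑ p ∈ F ×ˢ F, b p.1 p.2 * v p.1 * v p.2 * (φ p.1 - φ p.2) ^ 2 := by
    apply tsum_eq_sum
    intro p hp
    by_cases hb : b p.1 p.2 = 0
    · rw [hb]; ring
    · by_cases hx : φ p.1 = 0
      · by_cases hy : φ p.2 = 0
        · rw [hx, hy]; ring
        · exact absurd (hmemF p hb (Or.inr hy)) hp
      · exact absurd (hmemF p hb (Or.inl hx)) hp
  have h3 : (∑' x : Ω, w x.1 * v x.1 ^ 2 * φ x.1 ^ 2 * m x.1)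
      = ∑ x ∈ F, ∑ y ∈ F, b x y * (v x - v y) * (v x * φ x ^ 2) := by
    rw [tsum_subtype Ω (fun x => w x * v x ^ 2 * φ x ^ 2 * m x)]
    have h0 : ∀ x ∉ F, Ω.indicator (fun x => w x * v x ^ 2 * φ x ^ 2 * m x) x = 0 := by
      intro x hx
      have hφx : φ x = 0 := by by_contra h; exact hx (hSF x h)
      by_cases hxΩ : x ∈ Ω
      · rw [Set.indicator_of_mem hxΩ]; simp [hφx]
      · rw [Set.indicator_of_notMem hxΩ]
    rw [tsum_eq_sum h0]
    apply Finset.sum_congr rfl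
    intro x _
    by_cases hφx : φ x = 0
    · have : ∀ y ∈ F, b x y * (v x - v y) * (v x * φ x ^ 2) = 0 := by
        intro y _; rw [hφx]; ring
      rw [Finset.sum_eq_zero this]
      by_cases hxΩ : x ∈ Ω
      · rw [Set.indicator_of_mem hxΩ]; simp [hφx]
      · rw [Set.indicator_of_notMem hxΩ]
    · have hxΩ : x ∈ Ω := by by_contra h; exact hφx (hφΩ x h)
      rw [Set.indicator_of_mem hxΩ]
      have hT : (∑' y, b x y * (v x - v y)) = ∑ y ∈ F, b x y * (v x - v y) := by
        apply tsum_eq_sum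
        intro y hy
        have hb : b x y = 0 := by by_contra hb; exact hy (hNF x y hφx hb)
        rw [hb]; ring
      rw [hw x hxΩ, hT]
      have hvx := (hv x hxΩ).ne'
      have hmx := (hm x).ne'
      have hrhs : (∑ y ∈ F, b x y * (v x - v y) * (v x * φ x ^ 2))
          = (∑ y ∈ F, b x y * (v x - v y)) * (v x * φ x ^ 2) := by
        rw [Finset.sum_mul]
      rw [hrhs]
      field_simp
  rw [h1, h2, h3, Finset.sum_product, Finset.sum_product]
  have hswap : (∑ x ∈ F, ∑ y ∈ F, b x y * (v x - v y) * (v y * φ y ^ 2))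
      = - ∑ x ∈ F, ∑ y ∈ F, b x y * (v x - v y) * (v x * φ x ^ 2) := by
    rw [Finset.sum_comm, ← Finset.sum_neg_distrib]
    apply Finset.sum_congr rfl
    intro x _
    rw [← Finset.sum_neg_distrib]
    apply Finset.sum_congr rfl
    intro y _
    rw [hb_symm y x]; ring
  have hdiff : (∑ x ∈ F, ∑ y ∈ F, b (x, y).1 (x, y).2 *
        (v (x, y).1 * φ (x, y).1 - v (x, y).2 * φ (x, y).2) ^ 2)
      - (∑ x ∈ F, ∑ y ∈ F, b (x, y).1 (x, y).2 * v (x, y).1 * v (x, y).2 *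
        (φ (x, y).1 - φ (x, y).2) ^ 2)
      = 2 * ∑ x ∈ F, ∑ y ∈ F, b x y * (v x - v y) * (v x * φ x ^ 2) := by
    simp only []
    rw [← Finset.sum_sub_distrib]
    have : ∀ x ∈ F, (∑ y ∈ F, b x y * (v x * φ x - v y * φ y) ^ 2)
        - (∑ y ∈ F, b x y * v x * v y * (φ x - φ y) ^ 2)
        = ∑ y ∈ F, (b x y * (v x - v y) * (v x * φ x ^ 2)
            - b x y * (v x - v y) * (v y * φ y ^ 2)) := by
      intro x _
      rw [← Finset.sum_sub_distrib]
      apply Finset.sum_congr rfl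
      intro y _
      ring
    calc (∑ x ∈ F, ((∑ y ∈ F, b x y * (v x * φ x - v y * φ y) ^ 2)
          - ∑ y ∈ F, b x y * v x * v y * (φ x - φ y) ^ 2))
        = ∑ x ∈ F, ∑ y ∈ F, (b x y * (v x - v y) * (v x * φ x ^ 2)
            - b x y * (v x - v y) * (v y * φ y ^ 2)) := Finset.sum_congr rfl this
      _ = (∑ x ∈ F, ∑ y ∈ F, b x y * (v x - v y) * (v x * φ x ^ 2))
          - ∑ x ∈ F, ∑ y ∈ F, b x y * (v x - v y) * (v y * φ y ^ 2) := by
            rw [← Finset.sum_sub_distrib]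
            apply Finset.sum_congr rfl
            intro x _
            rw [← Finset.sum_sub_distrib]
      _ = 2 * ∑ x ∈ F, ∑ y ∈ F, b x y * (v x - v y) * (v x * φ x ^ 2) := by
            rw [hswap]; ring
  linarith [hdiff]
end

section
/- Let b be a weakly spherically symmetric graph over (X, m) with respect to O ⊆ X, and let u(r) = r/area(r) for r ≥ 1 and u(0) = γ ≥ 0. Then for all r ≥ 2, -Δu(r) = (1/vol(r)) · (r(κ(r) - κ(r-1)) + κ(r-1) - 1), where κ(r) = k₊(r)/k₋(r). Consequently, u is superharmonic on {r ≥ 2} if and only if κ(r) ≥ 1/r + (1 - 1/r)κ(r-1) for all r ≥ 2. -/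
theorem stmt12 (kp km vol area : ℕ → ℝ) (γ : ℝ) (hγ : 0 ≤ γ)
    (hkp : ∀ r, 0 < kp r) (hkm : ∀ r, 1 ≤ r → 0 < km r) (hvol : ∀ r, 0 < vol r)
    (harea : ∀ r : ℕ, 1 ≤ r → area r = km r * vol r ∧ area r = kp (r - 1) * vol (r - 1))
    (κ : ℕ → ℝ) (hκ : ∀ r, κ r = kp r / km r)
    (u : ℕ → ℝ) (hu0 : u 0 = γ) (hu : ∀ r : ℕ, 1 ≤ r → u r = r / area r)
    (lap : ℕ → ℝ)
    (hlap : ∀ r : ℕ, 1 ≤ r →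
      lap r = kp r * (u r - u (r + 1)) + km r * (u r - u (r - 1))) :
    (∀ r : ℕ, 2 ≤ r →
      lap r = (1 / vol r) * (r * (κ r - κ (r - 1)) + κ (r - 1) - 1)) ∧
    ((∀ r : ℕ, 2 ≤ r → 0 ≤ lap r) ↔
      ∀ r : ℕ, 2 ≤ r → 1 / (r : ℝ) + (1 - 1 / r) * κ (r - 1) ≤ κ r) := by
  have key : ∀ r : ℕ, 2 ≤ r →
      lap r = (1 / vol r) * (r * (κ r - κ (r - 1)) + κ (r - 1) - 1) := by
    intro r hr
    obtain ⟨ha1, ha2⟩ := harea r (by omega)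
    obtain ⟨hb1, hb2⟩ := harea (r + 1) (by omega)
    obtain ⟨hc1, _⟩ := harea (r - 1) (by omega)
    simp only [Nat.add_sub_cancel] at hb2
    have hkmr := hkm r (by omega)
    have hkmr1 := hkm (r - 1) (by omega)
    have hkpr := hkp r
    have hkpr1 := hkp (r - 1)
    have hvr := hvol r
    have hvr1 := hvol (r - 1)
    have hvolrel : vol (r - 1) = km r * vol r / kp (r - 1) := by
      rw [eq_div_iff hkpr1.ne']
      nlinarith [ha1, ha2]
    have hcast : ((r - 1 : ℕ) : ℝ) = (r : ℝ) - 1 := by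
      have : (1:ℕ) ≤ r := by omega
      push_cast [Nat.cast_sub this]; ring
    rw [hlap r (by omega), hu r (by omega), hu (r + 1) (by omega), hu (r - 1) (by omega),
      ha1, hb2, hc1, hvolrel, hκ r, hκ (r - 1), hcast]
    push_cast
    field_simp
    ring
  refine ⟨key, ?_⟩
  constructor
  · intro h r hr
    have hr0 : (0 : ℝ) < r := by positivity
    have hlr := h r hr
    rw [key r hr] at hlr
    have hv := hvol r
    have hE : 0 ≤ (r : ℝ) * (κ r - κ (r - 1)) + κ (r - 1) - 1 := by
      have h2 := mul_nonneg hlr hv.le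
      rw [one_div, inv_mul_eq_div, div_mul_eq_mul_div, mul_div_assoc,
        div_self hv.ne', mul_one] at h2
      exact h2
    have heq : κ r - (1 / (r : ℝ) + (1 - 1 / r) * κ (r - 1)) =
        ((r : ℝ) * (κ r - κ (r - 1)) + κ (r - 1) - 1) / r := by
      field_simp; ring
    linarith [div_nonneg hE hr0.le, heq]
  · intro h r hr
    have hr0 : (0 : ℝ) < r := by positivity
    have hh := h r hr
    rw [key r hr]
    have heq : κ r - (1 / (r : ℝ) + (1 - 1 / r) * κ (r - 1)) =
        ((r : ℝ) * (κ r - κ (r - 1)) + κ (r - 1) - 1) / r := by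
      field_simp; ring
    have h3 : 0 ≤ ((r : ℝ) * (κ r - κ (r - 1)) + κ (r - 1) - 1) / r := by
      rw [← heq]; linarith
    have h4 : (r : ℝ) * (((r : ℝ) * (κ r - κ (r - 1)) + κ (r - 1) - 1) / r) =
        (r : ℝ) * (κ r - κ (r - 1)) + κ (r - 1) - 1 := by
      field_simp
    have hE : 0 ≤ (r : ℝ) * (κ r - κ (r - 1)) + κ (r - 1) - 1 := by
      nlinarith [mul_nonneg hr0.le h3]
    exact mul_nonneg (one_div_nonneg.mpr (hvol r).le) hE
end

section
/- Under the hypotheses of the previous setting with u(r) = r/area(r) (r ≥ 1), u(0) = γ, for all r ≥ 2: -Δ√u(r) = √(k₋(r)·r/vol(r)) · (1 + κ(r) - √(κ(r)(1 + 1/r)) - √(κ(r-1)(1 - 1/r))). In particular if κ(r) = κ ≥ 1 is constant then √u is superharmonic on {r ≥ 2}, since 1 + κ - √(κ(1+1/r)) - √(κ(1-1/r)) ≥ (√κ - 1)² ≥ 0. -/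
private lemma mul_sqrt_eq (a x : ℝ) (ha : 0 ≤ a) :
    a * Real.sqrt x = Real.sqrt (a ^ 2 * x) := by
  rw [Real.sqrt_mul (sq_nonneg a), Real.sqrt_sq ha]

theorem stmt13 (kp km vol area : ℕ → ℝ) (γ : ℝ) (hγ : 0 ≤ γ)
    (hkp : ∀ r, 0 < kp r) (hkm : ∀ r, 1 ≤ r → 0 < km r) (hvol : ∀ r, 0 < vol r)
    (harea : ∀ r : ℕ, 1 ≤ r → area r = km r * vol r ∧ area r = kp (r - 1) * vol (r - 1))
    (κ : ℕ → ℝ) (hκ : ∀ r, κ r = kp r / km r)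
    (u : ℕ → ℝ) (hu0 : u 0 = γ) (hu : ∀ r : ℕ, 1 ≤ r → u r = r / area r)
    (lapS : ℕ → ℝ)
    (hlapS : ∀ r : ℕ, 1 ≤ r → lapS r =
      kp r * (Real.sqrt (u r) - Real.sqrt (u (r + 1))) +
        km r * (Real.sqrt (u r) - Real.sqrt (u (r - 1)))) :
    (∀ r : ℕ, 2 ≤ r → lapS r = Real.sqrt (km r * r / vol r) *
      (1 + κ r - Real.sqrt (κ r * (1 + 1 / r)) - Real.sqrt (κ (r - 1) * (1 - 1 / r)))) ∧
    (∀ c : ℝ, 1 ≤ c → (∀ r, κ r = c) → ∀ r : ℕ, 2 ≤ r →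
      (Real.sqrt c - 1) ^ 2 ≤
        1 + c - Real.sqrt (c * (1 + 1 / r)) - Real.sqrt (c * (1 - 1 / r)) ∧
      0 ≤ lapS r) := by
  have key : ∀ r : ℕ, 2 ≤ r → lapS r = Real.sqrt (km r * r / vol r) *
      (1 + κ r - Real.sqrt (κ r * (1 + 1 / r)) - Real.sqrt (κ (r - 1) * (1 - 1 / r))) := by
    intro r hr2
    have hr1 : 1 ≤ r := by omega
    have hrm1 : 1 ≤ r - 1 := by omega
    have hcast : ((r - 1 : ℕ) : ℝ) = (r : ℝ) - 1 := by
      have := Nat.cast_sub (R := ℝ) hr1; simpa using this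
    have hrR : (0 : ℝ) < r := by exact_mod_cast Nat.lt_of_lt_of_le Nat.zero_lt_two hr2
    have hA : 0 < km r := hkm r hr1
    have hV : 0 < vol r := hvol r
    have hAm : 0 < km (r - 1) := hkm _ hrm1
    have hPm : 0 < kp (r - 1) := hkp _
    have hP : 0 < kp r := hkp r
    obtain ⟨ha1, ha2⟩ := harea r hr1
    obtain ⟨hb1, hb2⟩ := harea (r + 1) (by omega)
    obtain ⟨hc1, _⟩ := harea (r - 1) hrm1
    rw [Nat.add_sub_cancel] at hb2
    -- values of u
    have hur : u r = (r : ℝ) / (km r * vol r) := by rw [hu r hr1, ha1]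
    have hurp : u (r + 1) = ((r : ℝ) + 1) / (kp r * vol r) := by
      rw [hu (r + 1) (by omega), hb2]; push_cast; ring
    have hvv : km r * vol r = kp (r - 1) * vol (r - 1) := ha1 ▸ ha2
    have hvolm : vol (r - 1) = km r * vol r / kp (r - 1) := by
      field_simp; linarith [hvv]
    have hurm : u (r - 1) = ((r : ℝ) - 1) * kp (r - 1) / (km (r - 1) * (km r * vol r)) := by
      rw [hu (r - 1) hrm1, hc1, hvolm, hcast]
      field_simp
    have hQnn : 0 ≤ km r * (r : ℝ) / vol r := by positivity
    have hKnn : 0 ≤ κ r := by rw [hκ]; positivity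
    -- four sqrt identities
    have E1 : kp r * Real.sqrt (u r) = κ r * Real.sqrt (km r * r / vol r) := by
      rw [mul_sqrt_eq _ _ hP.le, mul_sqrt_eq _ _ hKnn]
      congr 1
      rw [hur, hκ]
      field_simp
    have E2 : km r * Real.sqrt (u r) = Real.sqrt (km r * r / vol r) := by
      rw [mul_sqrt_eq _ _ hA.le]
      congr 1
      rw [hur]
      field_simp
    have E3 : kp r * Real.sqrt (u (r + 1)) =
        Real.sqrt ((km r * r / vol r) * (κ r * (1 + 1 / r))) := by
      rw [mul_sqrt_eq _ _ hP.le]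
      congr 1
      rw [hurp, hκ]
      field_simp
    have E4 : km r * Real.sqrt (u (r - 1)) =
        Real.sqrt ((km r * r / vol r) * (κ (r - 1) * (1 - 1 / r))) := by
      rw [mul_sqrt_eq _ _ hA.le]
      congr 1
      rw [hurm, hκ]
      field_simp
    have expand : lapS r = kp r * Real.sqrt (u r) + km r * Real.sqrt (u r)
        - kp r * Real.sqrt (u (r + 1)) - km r * Real.sqrt (u (r - 1)) := by
      rw [hlapS r hr1]; ring
    rw [expand, E1, E2, E3, E4,
      Real.sqrt_mul hQnn (κ r * (1 + 1 / r)),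
      Real.sqrt_mul hQnn (κ (r - 1) * (1 - 1 / r))]
    ring
  refine ⟨key, ?_⟩
  intro c hc hκc r hr2
  have hc0 : (0 : ℝ) ≤ c := by linarith
  have hrR : (2 : ℝ) ≤ r := by exact_mod_cast hr2
  have hx0 : (0 : ℝ) ≤ 1 / r := by positivity
  have hx1 : (1 : ℝ) / r ≤ 1 := by
    rw [div_le_one (by linarith)]; linarith
  have h1 : (0 : ℝ) ≤ 1 + 1 / r := by linarith
  have h2 : (0 : ℝ) ≤ 1 - 1 / r := by linarith
  set s1 := Real.sqrt (1 + 1 / (r : ℝ)) with hs1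
  set s2 := Real.sqrt (1 - 1 / (r : ℝ)) with hs2
  have hs1sq : s1 ^ 2 = 1 + 1 / (r : ℝ) := Real.sq_sqrt h1
  have hs2sq : s2 ^ 2 = 1 - 1 / (r : ℝ) := Real.sq_sqrt h2
  have hs1n : 0 ≤ s1 := Real.sqrt_nonneg _
  have hs2n : 0 ≤ s2 := Real.sqrt_nonneg _
  have hprod : s1 * s2 = Real.sqrt ((1 + 1 / (r : ℝ)) * (1 - 1 / (r : ℝ))) :=
    (Real.sqrt_mul h1 _).symm
  have hprodle : s1 * s2 ≤ 1 := by
    rw [hprod]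
    calc Real.sqrt ((1 + 1 / (r : ℝ)) * (1 - 1 / (r : ℝ))) ≤ Real.sqrt 1 :=
          Real.sqrt_le_sqrt (by nlinarith)
      _ = 1 := Real.sqrt_one
  have hsum : s1 + s2 ≤ 2 := by nlinarith [sq_nonneg (s1 + s2)]
  have hcs : Real.sqrt c ^ 2 = c := Real.sq_sqrt hc0
  have hcn : 0 ≤ Real.sqrt c := Real.sqrt_nonneg c
  have hmain : (Real.sqrt c - 1) ^ 2 ≤
      1 + c - Real.sqrt (c * (1 + 1 / r)) - Real.sqrt (c * (1 - 1 / r)) := by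
    rw [Real.sqrt_mul hc0, Real.sqrt_mul hc0, ← hs1, ← hs2]
    nlinarith [mul_nonneg hcn (by linarith : (0 : ℝ) ≤ 2 - s1 - s2)]
  refine ⟨hmain, ?_⟩
  rw [key r hr2, hκc r, hκc (r - 1)]
  exact mul_nonneg (Real.sqrt_nonneg _) (by nlinarith [sq_nonneg (Real.sqrt c - 1)])
end

section
/- Let d ≥ 3, f(r) = sinh^{d-1}(r), and u(r) = r/f(r) for r > 0. Then the radial hyperbolic Laplacian applied to √u satisfies -(√u)''(r) - (d-1)coth(r)(√u)'(r) = W(r)√u(r) for all r > 0, where W(r) = (d-1)²/4 + 1/(4r²) + (d-1)(d-3)/(4 sinh²(r)). -/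
/-!
Write √u = w h with w = √r and h = sinh^a r, a = -(d-1)/2. Since (d-1) coth = -2h'/h, the w' terms
cancel in the Leibniz expansion of -(wh)'' - (d-1) coth (wh)', leaving (-w'' + V w) h with
V = (2h'²/h - h'')/h = (d-1)²/4 + (d-1)(d-3)/(4 sinh²); and -w'' = w/(4r²).
-/

open Real Filter Topology Set

theorem deriv_deriv_mul_of_hasDerivAt {w h w' h' : ℝ → ℝ} {U : Set ℝ} {x w'' h'' : ℝ}
    (hU : IsOpen U) (hx : x ∈ U) (hw : ∀ y ∈ U, HasDerivAt w (w' y) y)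
    (hh : ∀ y ∈ U, HasDerivAt h (h' y) y) (hw' : HasDerivAt w' w'' x)
    (hh' : HasDerivAt h' h'' x) :
    deriv (deriv fun y => w y * h y) x = w'' * h x + 2 * (w' x * h' x) + w x * h'' := by
  have hderiv : deriv (fun y => w y * h y) =ᶠ[𝓝 x] fun y => w' y * h y + w y * h' y :=
    eventually_of_mem (hU.mem_nhds hx) fun y hy => ((hw y hy).fun_mul (hh y hy)).deriv
  rw [hderiv.deriv_eq, ((hw'.fun_mul (hh x hx)).fun_add ((hw x hx).fun_mul hh')).deriv]
  ring

theorem hasDerivAt_one_div_two_mul_sqrt {x : ℝ} (hx : 0 < x) :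
    HasDerivAt (fun y => 1 / (2 * √y)) (-1 / (4 * x * √x)) x := by
  have h := ((hasDerivAt_sqrt hx.ne').const_mul 2).inv (by positivity)
  rw [show (fun y => 2 * √y)⁻¹ = fun y => 1 / (2 * √y) by ext; simp] at h
  refine h.congr_deriv ?_
  rw [mul_pow, sq_sqrt hx.le]
  field_simp
  norm_num

theorem hasDerivAt_sinh_rpow {x : ℝ} (a : ℝ) (hx : 0 < x) :
    HasDerivAt (fun y => sinh y ^ a) (a * cosh x * sinh x ^ (a - 1)) x := by
  convert (hasDerivAt_sinh x).rpow_const (p := a) (Or.inl (sinh_pos_iff.2 hx).ne') using 1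
  ring

theorem hasDerivAt_mul_cosh_mul_sinh_rpow {x : ℝ} (a : ℝ) (hx : 0 < x) :
    HasDerivAt (fun y => a * cosh y * sinh y ^ (a - 1))
      (a * sinh x * sinh x ^ (a - 1) + a * cosh x * ((a - 1) * cosh x * sinh x ^ (a - 1 - 1))) x :=
  ((hasDerivAt_cosh x).const_mul a).mul (hasDerivAt_sinh_rpow (a - 1) hx)

theorem sqrt_div_sinh_pow_eq {s : ℝ} (n : ℕ) (hs : 0 < s) :
    √(s / sinh s ^ n) = √s * sinh s ^ (-(n / 2 : ℝ)) := by
  have hS : 0 < sinh s := sinh_pos_iff.2 hs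
  rw [sqrt_div hs.le, sqrt_eq_rpow (sinh s ^ n), ← rpow_natCast, ← rpow_mul hS.le,
    div_eq_mul_inv, ← rpow_neg hS.le]
  ring_nf

theorem stmt19 (d : ℕ) (hd : 3 ≤ d) :
    ∀ r : ℝ, 0 < r →
      -(deriv (deriv fun s : ℝ => Real.sqrt (s / Real.sinh s ^ (d - 1))) r) -
        ((d : ℝ) - 1) * (Real.cosh r / Real.sinh r) *
          deriv (fun s : ℝ => Real.sqrt (s / Real.sinh s ^ (d - 1))) r =
      (((d : ℝ) - 1) ^ 2 / 4 + 1 / (4 * r ^ 2) +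
          ((d : ℝ) - 1) * ((d : ℝ) - 3) / (4 * Real.sinh r ^ 2)) *
        Real.sqrt (r / Real.sinh r ^ (d - 1)) := by
  intro r hr
  set a : ℝ := -(((d : ℝ) - 1) / 2) with ha
  have hv : (fun s => √(s / sinh s ^ (d - 1))) =ᶠ[𝓝 r] fun s => √s * sinh s ^ a :=
    eventually_of_mem (Ioi_mem_nhds hr) fun s hs => by
      dsimp only
      rw [sqrt_div_sinh_pow_eq _ hs, Nat.cast_sub (by omega : 1 ≤ d), Nat.cast_one]
  rw [hv.deriv.deriv_eq, hv.deriv_eq, hv.eq_of_nhds,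
    deriv_deriv_mul_of_hasDerivAt isOpen_Ioi hr (fun y hy => hasDerivAt_sqrt (ne_of_gt hy))
      (fun y hy => hasDerivAt_sinh_rpow a hy) (hasDerivAt_one_div_two_mul_sqrt hr)
      (hasDerivAt_mul_cosh_mul_sinh_rpow a hr),
    ((hasDerivAt_sqrt hr.ne').fun_mul (hasDerivAt_sinh_rpow a hr)).deriv]
  have hS : sinh r ≠ 0 := (sinh_pos_iff.2 hr).ne'
  simp only [rpow_sub_one hS]
  have hcosh := cosh_sq r
  clear hv
  generalize sinh r = S, cosh r = C, sinh r ^ a = P at *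
  rw [ha]
  obtain ⟨q, hq, rfl⟩ : ∃ q, 0 < q ∧ r = q ^ 2 := ⟨√r, sqrt_pos.2 hr, (sq_sqrt hr.le).symm⟩
  rw [sqrt_sq hq.le]
  field_simp
  linear_combination (4 * ((d : ℝ) ^ 2 - 4 * d + 3)) * P * q ^ 4 * hcosh
end
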